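/- arXiv:1111.5119 — 4 statements merged into one kernel-verified Lean document; each statement's English description precedes it below -/
import Mathlib

section
/- Let (X,d) be a complete separable metric space and f : X → ℝ a continuous function. Then the lower ascending slope along geodesics |∇g⁺f| is universally measurable; in fact, for every T ∈ ℝ the superlevel set {x : |∇g⁺f|(x) > T} is the projection to X of a Borel subset of X × Geo(X), hence analytic (Suslin). -/
/-!
A superlevel set `{x | T < geoSlope f x}` is the union, over rationals `q`, `δ`, `r` with
`T < q`, of the projections of closed subsets of the Polish space `X × (ℚ → X)`: a geodesic is
determined by its samples at rational times, and "the samples come from a geodesic from `x` of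
length `≥ r` along which `f` grows at rate `≥ q` up to time `δ`" is a closed condition on them
(completeness of `X` turns admissible samples back into a geodesic). Hence the set is analytic.

Analytic sets are null-measurable for finite measures by Choquet's capacitability argument: the
outer measure of a continuous image of `ℕ → ℕ` is approximated by that of the image of a compact
box `{x | ∀ i, x i ≤ n i}`, whose bounds `n i` are chosen one coordinate at a time.
-/

open Filter Set Metric MeasureTheory Topology
open scoped ENNReal NNReal

variable {X : Type*} [MetricSpace X]

/-- A constant-speed geodesic parametrized on `[0,1]` (as a map from `ℝ`). -/
def IsGeodesicSeg (γ : ℝ → X) : Prop :=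
  ∀ s ∈ Set.Icc (0:ℝ) 1, ∀ t ∈ Set.Icc (0:ℝ) 1,
    dist (γ s) (γ t) = |t - s| * dist (γ 0) (γ 1)

/-- The lower ascending slope along geodesics `|∇g⁺ f|(x)`. -/
noncomputable def geoSlope (f : X → ℝ) (x : X) : ℝ≥0∞ :=
  ⨆ γ ∈ {γ : ℝ → X | IsGeodesicSeg γ ∧ γ 0 = x ∧ γ 0 ≠ γ 1},
    Filter.liminf (fun s => ENNReal.ofReal (max (f (γ s) - f x) 0 / dist (γ s) x))
      (nhdsWithin (0:ℝ) (Set.Ioi 0))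

section AnalyticNullMeasurable

variable {α : Type*}

lemma isCompact_setOf_forall_le (n : ℕ → ℕ) : IsCompact {x : ℕ → ℕ | ∀ i, x i ≤ n i} := by
  simpa only [Set.pi, mem_univ, true_imp_iff, mem_Iic] using
    isCompact_univ_pi fun i => (Set.finite_Iic (n i)).isCompact

lemma Continuous.exists_image_setOf_forall_lt_le_subset [TopologicalSpace α]
    {f : (ℕ → ℕ) → α} (hf : Continuous f) {n : ℕ → ℕ} {U : Set α} (hU : IsOpen U)
    (hnU : f '' {x | ∀ i, x i ≤ n i} ⊆ U) :
    ∃ k, f '' {x | ∀ i < k, x i ≤ n i} ⊆ U := by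
  by_contra! h
  choose x hx hxU using fun k => by
    simpa only [image_subset_iff, not_subset, mem_preimage, mem_ofPred_eq] using h k
  -- Clamping `x k` into the compact box changes only coordinates `≥ k`.
  let y k i := min (x k i) (n i)
  obtain ⟨a, ha, φ, hφ, hya⟩ :=
    (isCompact_setOf_forall_le n).tendsto_subseq (x := y) fun k i => min_le_right _ _
  have hxa : Tendsto (fun k => x (φ k)) atTop (𝓝 a) := by
    refine tendsto_pi_nhds.2 fun i => (((continuous_apply i).tendsto a).comp hya).congr' ?_
    filter_upwards [eventually_gt_atTop i] with k hk
    exact min_eq_left (hx _ _ (hk.trans_le hφ.le_apply))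
  obtain ⟨k, hk⟩ :=
    (((hf.tendsto a).comp hxa).eventually (hU.mem_nhds (hnU (mem_image_of_mem f ha)))).exists
  exact hxU _ hk

lemma exists_measure_image_le_add [MeasurableSpace α] (μ : Measure α) [IsFiniteMeasure μ]
    (f : (ℕ → ℕ) → α) (S : Set (ℕ → ℕ)) (k : ℕ) {ε : ℝ≥0∞} (hε : ε ≠ 0) :
    ∃ m, μ (f '' S) ≤ μ (f '' (S ∩ {x | x k ≤ m})) + ε := by
  have hmono : Monotone fun m => f '' (S ∩ {x | x k ≤ m}) := fun m m' hm =>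
    image_mono (inter_subset_inter_right _ fun x hx => le_trans hx hm)
  have hunion : ⋃ m, f '' (S ∩ {x | x k ≤ m}) = f '' S := by
    rw [← image_iUnion, ← inter_iUnion,
      inter_eq_left.2 fun x _ => mem_iUnion.2 ⟨x k, mem_ofPred.2 le_rfl⟩]
  have hlim := (tendsto_measure_iUnion_atTop (μ := μ) hmono).add_const ε
  rw [hunion] at hlim
  exact (hlim.eventually_const_lt (ENNReal.lt_add_right (measure_ne_top μ _) hε)).exists.imp
    fun _ => le_of_lt

lemma Continuous.exists_isCompact_subset_range_le_add [TopologicalSpace α] [MeasurableSpace α]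
    {f : (ℕ → ℕ) → α} (hf : Continuous f) (μ : Measure α) [IsFiniteMeasure μ] [μ.OuterRegular]
    {ε : ℝ≥0∞} (hε : ε ≠ 0) : ∃ K ⊆ range f, IsCompact K ∧ μ (range f) ≤ μ K + ε := by
  obtain ⟨δ, hδ, hδε⟩ := ENNReal.exists_pos_sum_of_countable (ENNReal.half_pos hε).ne' ℕ
  choose m hm using fun S k =>
    exists_measure_image_le_add μ f S k (ENNReal.coe_ne_zero.2 (hδ k).ne')
  -- Greedily bound one more coordinate at each step, losing at most `δ k` of measure.
  let C : ℕ → Set (ℕ → ℕ) := fun k => Nat.rec univ (fun k S => S ∩ {x | x k ≤ m S k}) k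
  let n : ℕ → ℕ := fun k => m (C k) k
  have hC : ∀ k, C k ⊆ {x | ∀ i < k, x i ≤ n i} := by
    intro k
    induction k with
    | zero => simp
    | succ k ih =>
      rintro x ⟨hxk, hx⟩ i hi
      rcases Nat.lt_succ_iff_lt_or_eq.1 hi with hi | rfl
      exacts [ih hxk i hi, hx]
  have hμC : ∀ k, μ (range f) ≤ μ (f '' C k) + ∑ i ∈ Finset.range k, (δ i : ℝ≥0∞) := by
    intro k
    induction k with
    | zero => simp [C]
    | succ k ih =>
      calc μ (range f) ≤ μ (f '' C k) + ∑ i ∈ Finset.range k, (δ i : ℝ≥0∞) := ih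
        _ ≤ μ (f '' C (k + 1)) + δ k + ∑ i ∈ Finset.range k, (δ i : ℝ≥0∞) := by
          gcongr; exact hm _ _
        _ = μ (f '' C (k + 1)) + ∑ i ∈ Finset.range (k + 1), (δ i : ℝ≥0∞) := by
          rw [Finset.sum_range_succ]; ring
  set K := f '' {x | ∀ i, x i ≤ n i}
  obtain ⟨U, hKU, hU, hμU⟩ := Set.exists_isOpen_le_add K μ (ENNReal.half_pos hε).ne'
  obtain ⟨k, hk⟩ := hf.exists_image_setOf_forall_lt_le_subset hU hKU
  refine ⟨K, image_subset_range _ _, (isCompact_setOf_forall_le n).image hf, ?_⟩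
  calc μ (range f) ≤ μ (f '' C k) + ∑ i ∈ Finset.range k, (δ i : ℝ≥0∞) := hμC k
    _ ≤ μ U + ε / 2 := add_le_add (measure_mono ((image_mono (hC k)).trans hk))
      ((ENNReal.sum_le_tsum _).trans hδε.le)
    _ ≤ μ K + ε / 2 + ε / 2 := by gcongr
    _ = μ K + ε := by rw [add_assoc, ENNReal.add_halves]

lemma nullMeasurableSet_of_forall_exists_subset_le_add [MeasurableSpace α] {μ : Measure α}
    {s : Set α} (hs : μ s ≠ ∞) (h : ∀ ε ≠ 0, ∃ t ⊆ s, MeasurableSet t ∧ μ s ≤ μ t + ε) :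
    NullMeasurableSet s μ := by
  choose t hts ht hμt using fun n : ℕ => h (n : ℝ≥0∞)⁻¹ (ENNReal.inv_ne_zero.2 (by simp))
  have hμs : μ s ≤ μ (⋃ n, t n) := by
    refine ENNReal.le_of_forall_pos_le_add fun ε hε _ => ?_
    obtain ⟨n, hn⟩ := ENNReal.exists_inv_nat_lt (ENNReal.coe_ne_zero.2 hε.ne')
    exact (hμt n).trans (add_le_add (measure_mono (subset_iUnion t n)) hn.le)
  have ht_meas := (MeasurableSet.iUnion ht).nullMeasurableSet (μ := μ)
  exact ht_meas.congr (ae_eq_of_subset_of_measure_ge (iUnion_subset hts) hμs ht_meas hs)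

theorem MeasureTheory.AnalyticSet.nullMeasurableSet [TopologicalSpace α] [T2Space α]
    [MeasurableSpace α] [OpensMeasurableSpace α] {s : Set α} (hs : AnalyticSet s) (μ : Measure α)
    [IsFiniteMeasure μ] [μ.OuterRegular] : NullMeasurableSet s μ := by
  rw [AnalyticSet] at hs
  obtain rfl | ⟨f, hf, rfl⟩ := hs
  · exact nullMeasurableSet_empty
  refine nullMeasurableSet_of_forall_exists_subset_le_add (measure_ne_top μ _) fun ε hε => ?_
  obtain ⟨K, hKf, hK, hμK⟩ := hf.exists_isCompact_subset_range_le_add μ hε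
  exact ⟨K, hKf, hK.isClosed.measurableSet, hμK⟩

end AnalyticNullMeasurable

lemma IsClosed.Ioo_subset_of_forall_ratCast_mem {s : Set ℝ} (hs : IsClosed s) {a b : ℝ}
    (h : ∀ q : ℚ, (q : ℝ) ∈ Ioo a b → (q : ℝ) ∈ s) : Ioo a b ⊆ s := fun _ ht =>
  hs.closure_subset_iff.2 (by rintro _ ⟨hq, q, rfl⟩; exact h q hq)
    (Rat.denseRange_cast.open_subset_closure_inter isOpen_Ioo ht)

lemma IsGeodesicSeg.dist_zero {γ : ℝ → X} (hγ : IsGeodesicSeg γ) {s : ℝ}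
    (hs : s ∈ Icc (0 : ℝ) 1) : dist (γ s) (γ 0) = s * dist (γ 0) (γ 1) := by
  rw [hγ s hs 0 (left_mem_Icc.2 zero_le_one), zero_sub, abs_neg, abs_of_nonneg hs.1]

local notation "clamp" => Set.projIcc (0 : ℝ) 1 zero_le_one

lemma exists_isGeodesicSeg_ratCast_eq [CompleteSpace X] {u : ℚ → X}
    (hu : ∀ a b : ℚ, dist (u a) (u b) = |(clamp b : ℝ) - clamp a| * dist (u 0) (u 1)) :
    ∃ γ : ℝ → X, Continuous γ ∧ IsGeodesicSeg γ ∧ ∀ a : ℚ, γ a = u a := by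
  set C := dist (u 0) (u 1)
  have hu_lip : LipschitzWith ⟨C, dist_nonneg⟩ u := LipschitzWith.of_dist_le_mul fun a b => by
    rw [hu, Rat.dist_eq, mul_comm, abs_sub_comm]
    exact mul_le_mul_of_nonneg_left (abs_projIcc_sub_projIcc zero_le_one) dist_nonneg
  have he := Rat.isUniformEmbedding_coe_real.isUniformInducing
  set γ := (he.isDenseInducing Rat.denseRange_cast).extend u
  have hγu : ∀ a : ℚ, γ a = u a :=
    uniformly_extend_of_ind he Rat.denseRange_cast hu_lip.uniformContinuous
  have hγ : Continuous γ :=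
    (uniformContinuous_uniformly_extend he Rat.denseRange_cast hu_lip.uniformContinuous).continuous
  have hdist : ∀ s t : ℝ, dist (γ s) (γ t) = |(clamp t : ℝ) - clamp s| * C := by
    have := (Rat.denseRange_cast.prodMap Rat.denseRange_cast).equalizer
      (g := fun p : ℝ × ℝ => dist (γ p.1) (γ p.2)) (h := fun p => |(clamp p.2 : ℝ) - clamp p.1| * C)
      (by fun_prop) (by fun_prop) (funext fun p => by simp [hγu, hu])
    exact fun s t => congrFun this (s, t)
  have hγ0 : γ 0 = u 0 := by simpa using hγu 0
  have hγ1 : γ 1 = u 1 := by simpa using hγu 1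
  refine ⟨γ, hγ, fun s hs t ht => ?_, hγu⟩
  rw [hdist, projIcc_of_mem _ hs, projIcc_of_mem _ ht, hγ0, hγ1]

/-- `(x, u)` records the samples `u a = γ (clamp a)` at rational times of a geodesic `γ` from `x`
of length at least `r`, along which `f` grows at rate at least `q` up to time `δ`. -/
def slopeWitnesses (f : X → ℝ) (q δ r : ℝ) : Set (X × (ℚ → X)) :=
  {p | (∀ a b : ℚ, dist (p.2 a) (p.2 b) = |(clamp b : ℝ) - clamp a| * dist (p.2 0) (p.2 1)) ∧
    p.2 0 = p.1 ∧ r ≤ dist (p.2 0) (p.2 1) ∧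
    ∀ a : ℚ, 0 < a → (a : ℝ) < δ → q * dist (p.2 a) p.1 ≤ f (p.2 a) - f p.1}

lemma isClosed_slopeWitnesses {f : X → ℝ} (hf : Continuous f) (q δ r : ℝ) :
    IsClosed (slopeWitnesses f q δ r) := by
  simp only [slopeWitnesses, ofPred_and, ofPred_forall]
  repeat' first
    | refine .inter ?_ ?_
    | refine isClosed_iInter fun _ => ?_
    | refine isClosed_eq ?_ ?_
    | refine isClosed_le ?_ ?_
  all_goals fun_prop

lemma ofReal_le_geoSlope_of_mem_slopeWitnesses [CompleteSpace X] {f : X → ℝ} (hf : Continuous f)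
    {q δ r : ℝ} (hδ : 0 < δ) (hr : 0 < r) {x : X} {u : ℚ → X}
    (hxu : (x, u) ∈ slopeWitnesses f q δ r) : ENNReal.ofReal q ≤ geoSlope f x := by
  obtain ⟨hu, hx, hr_le, hgrowth⟩ := hxu
  dsimp only at hu hx hr_le hgrowth
  subst hx
  obtain ⟨γ, hγc, hγ, hγu⟩ := exists_isGeodesicSeg_ratCast_eq hu
  have hγ0 : γ 0 = u 0 := by simpa using hγu 0
  have hγ1 : γ 1 = u 1 := by simpa using hγu 1
  have hlen : 0 < dist (γ 0) (γ 1) := by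
    rw [hγ0, hγ1]
    exact hr.trans_le hr_le
  have hgrowth' : Ioo 0 (min δ 1) ⊆ {s | q * dist (γ s) (u 0) ≤ f (γ s) - f (u 0)} :=
    (isClosed_le (by fun_prop) (by fun_prop)).Ioo_subset_of_forall_ratCast_mem fun a ha => by
      simpa only [mem_ofPred_eq, hγu] using
        hgrowth a (by exact_mod_cast ha.1) (ha.2.trans_le (min_le_left _ _))
  have hbound : ∀ᶠ s in 𝓝[>] (0 : ℝ),
      ENNReal.ofReal q ≤ ENNReal.ofReal (max (f (γ s) - f (u 0)) 0 / dist (γ s) (u 0)) := by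
    filter_upwards [Ioo_mem_nhdsGT (lt_min hδ one_pos)] with s hs
    have hd : 0 < dist (γ s) (u 0) := by
      rw [← hγ0, hγ.dist_zero ⟨hs.1.le, hs.2.le.trans (min_le_right _ _)⟩]
      exact mul_pos hs.1 hlen
    exact ENNReal.ofReal_le_ofReal ((le_div_iff₀ hd).2 ((hgrowth' hs).trans (le_max_left _ _)))
  exact (le_liminf_of_le (by isBoundedDefault) hbound).trans
    (le_iSup₂_of_le γ ⟨hγ, hγ0, dist_pos.1 hlen⟩ le_rfl)

lemma exists_mem_slopeWitnesses_of_lt_geoSlope {f : X → ℝ} {T : ℝ≥0∞} {x : X}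
    (hx : T < geoSlope f x) : ∃ q δ r : ℚ, T < ENNReal.ofReal q ∧ 0 < δ ∧ 0 < r ∧
      x ∈ Prod.fst '' slopeWitnesses f q δ r := by
  obtain ⟨γ, ⟨hγ, hγ0, hne⟩, hlt⟩ := lt_biSup_iff.1 hx
  obtain ⟨q, hq, hTq, hq_lt⟩ := ENNReal.lt_iff_exists_rat_btwn.1 hlt
  obtain ⟨ε, hε : 0 < ε, hεq⟩ :=
    mem_nhdsGT_iff_exists_Ioo_subset.1 (eventually_lt_of_lt_liminf hq_lt)
  obtain ⟨δ, hδ, hδε⟩ := exists_rat_btwn (lt_min hε one_pos)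
  obtain ⟨r, hr, hr_len⟩ := exists_rat_btwn (dist_pos.2 hne)
  have hclamp0 : (clamp 0 : ℝ) = 0 := congrArg Subtype.val (projIcc_left zero_le_one)
  have hclamp1 : (clamp 1 : ℝ) = 1 := congrArg Subtype.val (projIcc_right zero_le_one)
  refine ⟨q, δ, r, hTq, by exact_mod_cast hδ, by exact_mod_cast hr,
    (x, fun a => γ (clamp a)), ⟨fun a b => ?_, ?_, ?_, fun a ha haδ => ?_⟩, rfl⟩
  · simpa [hclamp0, hclamp1] using hγ _ (clamp a).2 _ (clamp b).2
  · simpa [hclamp0] using hγ0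
  · simpa [hclamp0, hclamp1] using hr_len.le
  · have haδ' : (a : ℝ) < min ε 1 := haδ.trans hδε
    have ha' : (a : ℝ) ∈ Icc 0 1 := ⟨by exact_mod_cast ha.le, (haδ'.trans_le (min_le_right _ _)).le⟩
    dsimp only
    rw [projIcc_of_mem _ ha']
    have hd : 0 < dist (γ a) x := by
      rw [← hγ0, hγ.dist_zero ha']
      exact mul_pos (by exact_mod_cast ha) (dist_pos.2 hne)
    have hslope := (ENNReal.ofReal_lt_ofReal_iff'.1 (hεq ⟨by exact_mod_cast ha,
      haδ'.trans_le (min_le_left _ _)⟩)).1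
    rcases lt_max_iff.1 ((lt_div_iff₀ hd).1 hslope) with h | h
    · exact h.le
    · exact absurd h (mul_nonneg (by exact_mod_cast hq) hd.le).not_gt

lemma setOf_lt_geoSlope_eq_iUnion [CompleteSpace X] {f : X → ℝ} (hf : Continuous f) (T : ℝ≥0∞) :
    {x | T < geoSlope f x} = ⋃ (q : ℚ) (δ : ℚ) (r : ℚ) (_ : T < ENNReal.ofReal q ∧ 0 < δ ∧ 0 < r),
      Prod.fst '' slopeWitnesses f q δ r := by
  ext x
  simp only [mem_ofPred_eq, mem_iUnion, exists_prop]
  constructor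
  · intro hx
    obtain ⟨q, δ, r, hq, hδ, hr, hx⟩ := exists_mem_slopeWitnesses_of_lt_geoSlope hx
    exact ⟨q, δ, r, ⟨hq, hδ, hr⟩, hx⟩
  · rintro ⟨q, δ, r, ⟨hq, hδ, hr⟩, ⟨x, u⟩, hxu, rfl⟩
    exact hq.trans_le (ofReal_le_geoSlope_of_mem_slopeWitnesses hf (by exact_mod_cast hδ)
      (by exact_mod_cast hr) hxu)

/-- The lower ascending slope along geodesics of a continuous function on a complete
separable metric space is universally measurable: every superlevel set is analytic
(Suslin), hence null-measurable with respect to every finite Borel measure. -/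
theorem geoSlope_universally_measurable
    [CompleteSpace X] [TopologicalSpace.SeparableSpace X]
    [MeasurableSpace X] [BorelSpace X]
    (f : X → ℝ) (hf : Continuous f) :
    ∀ T : ℝ≥0∞,
      MeasureTheory.AnalyticSet {x : X | T < geoSlope f x} ∧
      ∀ μ : Measure X, IsFiniteMeasure μ →
        MeasureTheory.NullMeasurableSet {x : X | T < geoSlope f x} μ := by
  intro T
  have hT : AnalyticSet {x | T < geoSlope f x} := by
    rw [setOf_lt_geoSlope_eq_iUnion hf]
    refine .iUnion fun q => .iUnion fun δ => .iUnion fun r => ?_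
    rw [iUnion_eq_if]
    split_ifs
    exacts [(isClosed_slopeWitnesses hf _ _ _).analyticSet.image_of_continuous continuous_fst,
      analyticSet_empty]
  exact ⟨hT, fun μ _ => hT.nullMeasurableSet μ⟩
end

section
/- Let (X,d) be a complete separable geodesic metric space and f : X → ℝ Lipschitz. Then for every constant-speed geodesic γ : [0,1] → X one has |f(γ_0) − f(γ_1)| ≤ l(γ) · ∫₀¹ |∇g⁺f|(γ_s) ds, i.e., the lower ascending slope along geodesics is an upper gradient of f along geodesics. -/
open Filter Set Metric MeasureTheory Topology
open scoped ENNReal NNReal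

variable {X : Type*} [MetricSpace X]

/-!
Along a geodesic `γ` of length `l`, the function `g = f ∘ γ` is Lipschitz on `[0,1]`, hence
absolutely continuous, so `|g 1 - g 0| ≤ ∫ |g'|`. At an interior point `s` where `g'(s)` exists,
the pieces of `γ` from `γ s` to `γ 1` and from `γ s` to `γ 0`, reparametrized on `[0,1]`, are
geodesics issuing from `γ s` along which the ascending difference quotient of `f` tends to
`g'(s)⁺ / l` and `(-g'(s))⁺ / l` respectively; hence `|g'(s)| ≤ l · |∇g⁺f|(γ s)`.
-/

theorem AbsolutelyContinuousOnInterval.ofReal_abs_sub_le_lintegral {g : ℝ → ℝ} {a b : ℝ}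
    (hab : a ≤ b) (hg : AbsolutelyContinuousOnInterval g a b) {ρ : ℝ → ℝ≥0∞}
    (hρ : ∀ x ∈ Ioo a b, ∀ d, HasDerivAt g d x → ENNReal.ofReal |d| ≤ ρ x) :
    ENNReal.ofReal |g b - g a| ≤ ∫⁻ x in Icc a b, ρ x := by
  have hderiv : ∀ᵐ x ∂volume.restrict (Ioo a b), ‖deriv g x‖ₑ ≤ ρ x := by
    filter_upwards [ae_restrict_mem measurableSet_Ioo, ae_restrict_of_ae hg.ae_differentiableAt]
      with x hx hdiff
    rw [Real.enorm_eq_ofReal_abs]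
    exact hρ x hx _ (hdiff (Icc_subset_uIcc (Ioo_subset_Icc_self hx))).hasDerivAt
  calc ENNReal.ofReal |g b - g a| = ‖∫ x in Ioo a b, deriv g x‖ₑ := by
        rw [← hg.integral_deriv_eq_sub, intervalIntegral.integral_of_le hab,
          integral_Ioc_eq_integral_Ioo, Real.enorm_eq_ofReal_abs]
    _ ≤ ∫⁻ x in Ioo a b, ‖deriv g x‖ₑ := enorm_integral_le_lintegral_enorm _
    _ ≤ ∫⁻ x in Ioo a b, ρ x := lintegral_mono_ae hderiv
    _ ≤ ∫⁻ x in Icc a b, ρ x := lintegral_mono_set Ioo_subset_Icc_self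

theorem IsGeodesicSeg.comp_affine {γ : ℝ → X} (hγ : IsGeodesicSeg γ) {a b : ℝ}
    (ha : a ∈ Icc (0:ℝ) 1) (hb : b ∈ Icc (0:ℝ) 1) :
    IsGeodesicSeg (fun t => γ (a + t * (b - a))) := by
  have hmem : ∀ t ∈ Icc (0:ℝ) 1, a + t * (b - a) ∈ Icc (0:ℝ) 1 := fun t ht =>
    (convex_Icc 0 1).add_smul_sub_mem ha hb ht
  intro s hs t ht
  rw [hγ _ (hmem s hs) _ (hmem t ht), hγ _ (hmem 0 (by simp)) _ (hmem 1 (by simp)),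
    show a + t * (b - a) - (a + s * (b - a)) = (t - s) * (b - a) by ring,
    show a + 1 * (b - a) - (a + 0 * (b - a)) = b - a by ring, abs_mul, mul_assoc]

theorem IsGeodesicSeg.lipschitzOnWith {γ : ℝ → X} (hγ : IsGeodesicSeg γ) :
    LipschitzOnWith (nndist (γ 0) (γ 1)) γ (Icc 0 1) := by
  refine LipschitzOnWith.of_dist_le_mul fun s hs t ht => ?_
  rw [hγ s hs t ht, Real.dist_eq, coe_nndist, mul_comm, abs_sub_comm]

theorem IsGeodesicSeg.ofReal_le_geoSlope_of_tendsto {f : X → ℝ} {δ : ℝ → X}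
    (hδ : IsGeodesicSeg δ) (hne : δ 0 ≠ δ 1) {c : ℝ}
    (hc : Tendsto (fun t => max (f (δ t) - f (δ 0)) 0 / dist (δ t) (δ 0)) (𝓝[>] 0) (𝓝 c)) :
    ENNReal.ofReal c ≤ geoSlope f (δ 0) :=
  le_iSup₂_of_le (f := fun γ (_ : γ ∈ {γ : ℝ → X | IsGeodesicSeg γ ∧ γ 0 = δ 0 ∧ γ 0 ≠ γ 1}) =>
      liminf (fun s => ENNReal.ofReal (max (f (γ s) - f (δ 0)) 0 / dist (γ s) (δ 0))) (𝓝[>] 0))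
    δ ⟨hδ, rfl, hne⟩ ((ENNReal.continuous_ofReal.tendsto c).comp hc).liminf_eq.ge

theorem IsGeodesicSeg.ofReal_div_dist_le_geoSlope_of_hasDerivWithinAt {f : X → ℝ}
    {δ : ℝ → X} (hδ : IsGeodesicSeg δ) (hne : δ 0 ≠ δ 1) {d : ℝ}
    (hd : HasDerivWithinAt (f ∘ δ) d (Ioi 0) 0) :
    ENNReal.ofReal (d / dist (δ 0) (δ 1)) ≤ geoSlope f (δ 0) := by
  set L := dist (δ 0) (δ 1)
  have hslope := (hasDerivWithinAt_iff_tendsto_slope' (lt_irrefl 0)).1 hd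
  have hquot : ∀ᶠ t in 𝓝[>] (0:ℝ), max (slope (f ∘ δ) 0 t) 0 / L =
      max (f (δ t) - f (δ 0)) 0 / dist (δ t) (δ 0) := by
    filter_upwards [Ioc_mem_nhdsGT zero_lt_one] with t ht
    rw [dist_comm, hδ 0 (by simp) t ⟨ht.1.le, ht.2⟩, slope_def_field, sub_zero, abs_of_pos ht.1,
      ← div_div, ← max_div_div_right ht.1.le, zero_div]
    rfl
  have hc := ((hslope.max tendsto_const_nhds).div_const L).congr' hquot
  exact (ENNReal.ofReal_le_ofReal (by gcongr; exact le_max_left _ _)).trans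
    (hδ.ofReal_le_geoSlope_of_tendsto hne hc)

theorem IsGeodesicSeg.ofReal_mul_sub_div_dist_le_geoSlope {f : X → ℝ} {γ : ℝ → X}
    (hγ : IsGeodesicSeg γ) {s b : ℝ} (hs : s ∈ Icc (0:ℝ) 1) (hb : b ∈ Icc (0:ℝ) 1)
    (hne : γ s ≠ γ b) {d : ℝ} (hd : HasDerivAt (f ∘ γ) d s) :
    ENNReal.ofReal (d * (b - s) / dist (γ s) (γ b)) ≤ geoSlope f (γ s) := by
  have hline : HasDerivAt (fun t : ℝ => s + t * (b - s)) (b - s) 0 := by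
    simpa using ((hasDerivAt_id (0:ℝ)).mul_const (b - s)).const_add s
  have hδ' : HasDerivAt (f ∘ fun t => γ (s + t * (b - s))) (d * (b - s)) 0 :=
    HasDerivAt.comp_of_eq 0 hd hline (by simp)
  have := (hγ.comp_affine hs hb).ofReal_div_dist_le_geoSlope_of_hasDerivWithinAt
    (by simpa using hne) hδ'.hasDerivWithinAt
  simpa using this

theorem IsGeodesicSeg.ofReal_abs_le_mul_geoSlope_of_hasDerivAt {f : X → ℝ} {γ : ℝ → X}
    (hγ : IsGeodesicSeg γ) (hL : 0 < dist (γ 0) (γ 1)) {s : ℝ} (hs : s ∈ Ioo (0:ℝ) 1) {d : ℝ}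
    (hd : HasDerivAt (f ∘ γ) d s) :
    ENNReal.ofReal |d| ≤ ENNReal.ofReal (dist (γ 0) (γ 1)) * geoSlope f (γ s) := by
  set L := dist (γ 0) (γ 1)
  have hsI : s ∈ Icc (0:ℝ) 1 := Ioo_subset_Icc_self hs
  have hdist : ∀ b ∈ Icc (0:ℝ) 1, dist (γ s) (γ b) = |b - s| * L := hγ s hsI
  have hslope : ENNReal.ofReal (|d| / L) ≤ geoSlope f (γ s) := by
    rcases le_total 0 d with hd0 | hd0
    · have hne : γ s ≠ γ 1 := by
        rw [← dist_pos, hdist 1 (by simp), abs_of_pos (sub_pos.2 hs.2)]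
        exact mul_pos (sub_pos.2 hs.2) hL
      convert hγ.ofReal_mul_sub_div_dist_le_geoSlope hsI (by simp) hne hd using 2
      rw [hdist 1 (by simp), abs_of_nonneg hd0, abs_of_pos (sub_pos.2 hs.2),
        mul_comm (1 - s), mul_div_mul_right _ _ (sub_pos.2 hs.2).ne']
    · have hne : γ s ≠ γ 0 := by
        rw [← dist_pos, hdist 0 (by simp), zero_sub, abs_neg, abs_of_pos hs.1]
        exact mul_pos hs.1 hL
      convert hγ.ofReal_mul_sub_div_dist_le_geoSlope hsI (by simp) hne hd using 2
      rw [hdist 0 (by simp), abs_of_nonpos hd0, zero_sub, abs_neg, abs_of_pos hs.1, mul_neg,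
        ← neg_mul, mul_comm s, mul_div_mul_right _ _ hs.1.ne']
  calc ENNReal.ofReal |d| = ENNReal.ofReal L * ENNReal.ofReal (|d| / L) := by
        rw [← ENNReal.ofReal_mul hL.le, mul_div_cancel₀ _ hL.ne']
    _ ≤ ENNReal.ofReal L * geoSlope f (γ s) := by gcongr

theorem geoSlope_upperGradient_along_geodesics_general
    (f : X → ℝ) (K : ℝ≥0) (hf : LipschitzWith K f)
    (γ : ℝ → X) (hγ : IsGeodesicSeg γ) :
    ENNReal.ofReal |f (γ 0) - f (γ 1)| ≤
      ENNReal.ofReal (dist (γ 0) (γ 1)) * ∫⁻ s in Set.Icc (0:ℝ) 1, geoSlope f (γ s) := by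
  rcases (dist_nonneg (x := γ 0) (y := γ 1)).eq_or_lt with hL | hL
  · simp [dist_eq_zero.1 hL.symm]
  have hac : AbsolutelyContinuousOnInterval (f ∘ γ) 0 1 :=
    ((hf.comp_lipschitzOnWith hγ.lipschitzOnWith).mono
      (uIcc_of_le zero_le_one).subset).absolutelyContinuousOnInterval
  rw [abs_sub_comm, ← lintegral_const_mul' _ _ ENNReal.ofReal_ne_top]
  exact hac.ofReal_abs_sub_le_lintegral zero_le_one fun s hs d hd =>
    hγ.ofReal_abs_le_mul_geoSlope_of_hasDerivAt hL hs hd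

/-- For a Lipschitz function on a complete separable geodesic metric space, the lower
ascending slope along geodesics is an upper gradient along geodesics:
`|f(γ₀) - f(γ₁)| ≤ l(γ) ∫₀¹ |∇g⁺f|(γ_s) ds` for every constant-speed geodesic `γ`. -/
theorem geoSlope_upperGradient_along_geodesics
    [CompleteSpace X] [TopologicalSpace.SeparableSpace X]
    (hgeo : ∀ x y : X, ∃ γ : ℝ → X, IsGeodesicSeg γ ∧ γ 0 = x ∧ γ 1 = y)
    (f : X → ℝ) (K : ℝ≥0) (hf : LipschitzWith K f)
    (γ : ℝ → X) (hγ : IsGeodesicSeg γ) :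
    ENNReal.ofReal |f (γ 0) - f (γ 1)| ≤
      ENNReal.ofReal (dist (γ 0) (γ 1)) * ∫⁻ s in Set.Icc (0:ℝ) 1, geoSlope f (γ s) :=
  geoSlope_upperGradient_along_geodesics_general f K hf γ hγ
end

section
/- Let (X,d) be a geodesic metric space, φ : X → ℝ, γ ∈ Geo(X) with φ(γ_0) + φ^c(γ_1) = d²(γ_0,γ_1)/2, and let y ∈ X, and z a point on γ with d(x,z) = d(y,x) where x = γ_0. If (φ(y) − φ(x))/d(y,x) > d(x,γ_1) − 1/n, then 0 ≤ d(y,x) + d(x,z) − d(y,z) ≤ (1 − 2(d(x,γ_1) − 1/n)/(d(x,γ_1) + d(y,γ_1)))·d(y,x). -/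
open Filter Set Metric MeasureTheory Topology
open scoped ENNReal NNReal

variable {X : Type*} [MetricSpace X]

/-!
The `c`-concavity inequality `φ y - φ x ≤ (d²(y,γ₁) - d²(x,γ₁))/2`, combined with the slope
bound, forces `d(y,γ₁) - d(x,γ₁) ≥ 2(d(x,γ₁) - 1/n) d(y,x) / (d(x,γ₁) + d(y,γ₁))`. Since `z`
lies on the geodesic from `x` to `γ₁`, the triangle inequality through `z` shows that the
alignment defect `d(y,x) + d(x,z) - d(y,z)` is at most `d(y,x) - (d(y,γ₁) - d(x,γ₁))`.
-/

theorem IsGeodesicSeg.dist_add_dist_eq {γ : ℝ → X} (hγ : IsGeodesicSeg γ) {s : ℝ}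
    (hs : s ∈ Icc (0 : ℝ) 1) : dist (γ 0) (γ s) + dist (γ s) (γ 1) = dist (γ 0) (γ 1) := by
  have h0 : (0 : ℝ) ∈ Icc (0 : ℝ) 1 := left_mem_Icc.mpr zero_le_one
  have h1 : (1 : ℝ) ∈ Icc (0 : ℝ) 1 := right_mem_Icc.mpr zero_le_one
  rw [hγ 0 h0 s hs, hγ s hs 1 h1, sub_zero, abs_of_nonneg hs.1, abs_of_nonneg (sub_nonneg.mpr hs.2)]
  ring

theorem dist_add_dist_sub_dist_le_of_dist_add_dist_eq {x y z p : X}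
    (hz : dist x z + dist z p = dist x p) :
    dist y x + dist x z - dist y z ≤ dist y x + dist x p - dist y p := by
  linarith [dist_triangle y z p]

theorem div_mul_le_sub_of_mul_lt_sq_sub_sq {a r D E : ℝ} (hDE : 0 < D + E)
    (h : a * r < (E ^ 2 - D ^ 2) / 2) : 2 * a / (D + E) * r ≤ E - D := by
  rw [div_mul_eq_mul_div, div_le_iff₀ hDE]
  nlinarith

theorem almost_alignment_general
    (γ : ℝ → X) (hγ : IsGeodesicSeg γ) (φ : X → ℝ) (c1 : ℝ)
    (x : X) (hx : x = γ 0)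
    (heq : φ x + c1 = dist x (γ 1) ^ 2 / 2)
    (hle : ∀ w : X, φ w + c1 ≤ dist w (γ 1) ^ 2 / 2)
    (y z : X) (hyx : 0 < dist y x)
    (hz : ∃ s ∈ Set.Icc (0:ℝ) 1, γ s = z) (hxz : dist x z = dist y x)
    (n : ℕ)
    (hslope : (φ y - φ x) / dist y x > dist x (γ 1) - 1 / n) :
    0 ≤ dist y x + dist x z - dist y z ∧
      dist y x + dist x z - dist y z ≤
        (1 - 2 * (dist x (γ 1) - 1 / n) / (dist x (γ 1) + dist y (γ 1))) * dist y x := by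
  obtain ⟨s, hs, rfl⟩ := hz
  subst hx
  have hz_on : dist (γ 0) (γ s) + dist (γ s) (γ 1) = dist (γ 0) (γ 1) := hγ.dist_add_dist_eq hs
  have hconcave : φ y - φ (γ 0) ≤ (dist y (γ 1) ^ 2 - dist (γ 0) (γ 1) ^ 2) / 2 := by
    linarith [hle y]
  have hDE : 0 < dist (γ 0) (γ 1) + dist y (γ 1) := by
    linarith [dist_nonneg (x := γ s) (y := γ 1), dist_nonneg (x := y) (y := γ 1)]
  have hgain := div_mul_le_sub_of_mul_lt_sq_sub_sq hDE
    (((lt_div_iff₀ hyx).mp hslope).trans_le hconcave)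
  refine ⟨by linarith [dist_triangle y (γ 0) (γ s)], ?_⟩
  linarith [dist_add_dist_sub_dist_le_of_dist_add_dist_eq (y := y) hz_on]

/-- The almost-alignment estimate from the blow-up argument of Theorem 4.5. Here
`x = γ₀`, `c1 = φ^c(γ₁)` (so the stated hypotheses express the Kantorovich relations),
`z` is a point on `γ` with `d(x,z) = d(y,x)`. -/
theorem almost_alignment
    (γ : ℝ → X) (hγ : IsGeodesicSeg γ) (φ : X → ℝ) (c1 : ℝ)
    (x : X) (hx : x = γ 0)
    (heq : φ x + c1 = dist x (γ 1) ^ 2 / 2)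
    (hle : ∀ w : X, φ w + c1 ≤ dist w (γ 1) ^ 2 / 2)
    (y z : X) (hyx : 0 < dist y x)
    (hz : ∃ s ∈ Set.Icc (0:ℝ) 1, γ s = z) (hxz : dist x z = dist y x)
    (n : ℕ) (hn : 0 < n)
    (hslope : (φ y - φ x) / dist y x > dist x (γ 1) - 1 / n) :
    0 ≤ dist y x + dist x z - dist y z ∧
      dist y x + dist x z - dist y z ≤
        (1 - 2 * (dist x (γ 1) - 1 / n) / (dist x (γ 1) + dist y (γ 1))) * dist y x :=
  almost_alignment_general γ hγ φ c1 x hx heq hle y z hyx hz hxz n hslope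
end

section
/- Let (X,d) be a geodesic metric space, φ a Kantorovich potential for cost d²/2, and γ ∈ Geo(X) with φ(γ_0) + φ^c(γ_1) = d²(γ_0,γ_1)/2. If φ is Lipschitz and |∇g⁺φ|(x) ≤ L for all x on the image of γ|_{[0,t]}, then φ(γ_0) − φ(γ_t) ≤ L·d(γ_0,γ_t); combined with the lower bound φ(γ_0) − φ(γ_t) ≥ ((2t−t²)/2) d²(γ_0,γ_1) this gives (1 − t/2)·d(γ_0,γ_1) ≤ L. -/
open Filter Set Metric MeasureTheory Topology
open scoped ENNReal NNReal

variable {X : Type*} [MetricSpace X]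

/-! Restricting `γ` to `[0,t]` and reversing it gives a geodesic from `γ_t` to `γ_0` of length
`d(γ_0,γ_t)`. Along any geodesic, the slope bound at a point, tested on the remaining piece of that
geodesic, bounds the lower right Dini derivative of `φ` along it by `L` times its length, so a
fencing argument gives `φ(γ_0) − φ(γ_t) ≤ L·d(γ_0,γ_t)`. The lower bound is the inequality
`φ + c1 ≤ d(·,γ_1)²/2`, with equality at `γ_0`, evaluated at `γ_t`; dividing by
`t·d(γ_0,γ_1)` gives the last claim. -/

namespace IsGeodesicSeg

variable {γ : ℝ → X}

theorem dist_zero_left (hγ : IsGeodesicSeg γ) {s : ℝ} (hs : s ∈ Icc (0:ℝ) 1) :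
    dist (γ 0) (γ s) = s * dist (γ 0) (γ 1) := by
  rw [hγ 0 ⟨le_rfl, zero_le_one⟩ s hs, sub_zero, abs_of_nonneg hs.1]

theorem dist_one_right (hγ : IsGeodesicSeg γ) {s : ℝ} (hs : s ∈ Icc (0:ℝ) 1) :
    dist (γ s) (γ 1) = (1 - s) * dist (γ 0) (γ 1) := by
  rw [hγ s hs 1 ⟨zero_le_one, le_rfl⟩, abs_of_nonneg (sub_nonneg.2 hs.2)]

theorem continuousOn (hγ : IsGeodesicSeg γ) : ContinuousOn γ (Icc 0 1) := by
  refine (LipschitzOnWith.of_dist_le_mul (K := Real.toNNReal (dist (γ 0) (γ 1))) ?_).continuousOn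
  intro x hx y hy
  rw [hγ x hx y hy, Real.coe_toNNReal _ dist_nonneg, Real.dist_eq, abs_sub_comm, mul_comm]

theorem comp_affine_s19 (hγ : IsGeodesicSeg γ) {a b : ℝ} (ha : a ∈ Icc (0:ℝ) 1)
    (hb : b ∈ Icc (0:ℝ) 1) : IsGeodesicSeg (fun v => γ (a + v * (b - a))) := by
  have hmem : ∀ v ∈ Icc (0:ℝ) 1, a + v * (b - a) ∈ Icc (0:ℝ) 1 := fun v hv => by
    simpa only [smul_eq_mul] using convex_Icc (0:ℝ) 1 |>.add_smul_sub_mem ha hb hv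
  intro u hu v hv
  simp only [zero_mul, add_zero, one_mul, add_sub_cancel]
  rw [hγ _ (hmem u hu) _ (hmem v hv), hγ a ha b hb, add_sub_add_left_eq_sub, ← sub_mul,
    abs_mul, mul_assoc]

theorem liminf_le_geoSlope (f : X → ℝ) {σ : ℝ → X} (hσ : IsGeodesicSeg σ) (hne : σ 0 ≠ σ 1) :
    liminf (fun v => ENNReal.ofReal (max (f (σ v) - f (σ 0)) 0 / dist (σ v) (σ 0)))
      (𝓝[>] (0:ℝ)) ≤ geoSlope f (σ 0) :=
  le_biSup (fun σ' : ℝ → X => liminf (fun v => ENNReal.ofReal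
    (max (f (σ' v) - f (σ 0)) 0 / dist (σ' v) (σ 0))) (𝓝[>] (0:ℝ)))
    (s := {γ | IsGeodesicSeg γ ∧ γ 0 = σ 0 ∧ γ 0 ≠ γ 1}) ⟨hσ, rfl, hne⟩

theorem frequently_sub_lt_of_geoSlope_lt {f : X → ℝ} {σ : ℝ → X} (hσ : IsGeodesicSeg σ)
    (hne : σ 0 ≠ σ 1) {c : ℝ} (hc : geoSlope f (σ 0) < ENNReal.ofReal c) :
    ∃ᶠ v in 𝓝[>] (0:ℝ), f (σ v) - f (σ 0) < c * (v * dist (σ 0) (σ 1)) := by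
  have hliminf := (liminf_le_geoSlope f hσ hne).trans_lt hc
  refine ((frequently_lt_of_liminf_lt (h := hliminf)).and_eventually
    (Ioo_mem_nhdsGT_of_mem ⟨le_rfl, one_pos⟩)).mono ?_
  rintro v ⟨hlt, hv0, hv1⟩
  have hdist : dist (σ v) (σ 0) = v * dist (σ 0) (σ 1) := by
    rw [dist_comm, hσ.dist_zero_left ⟨hv0.le, hv1.le⟩]
  have hdist_pos : 0 < v * dist (σ 0) (σ 1) := mul_pos hv0 (dist_pos.2 hne)
  rw [hdist, ENNReal.ofReal_lt_ofReal_iff'] at hlt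
  exact (le_max_left _ _).trans_lt ((div_lt_iff₀ hdist_pos).1 hlt.1)

theorem frequently_slope_comp_lt {f : X → ℝ} (hγ : IsGeodesicSeg γ)
    (hℓ : 0 < dist (γ 0) (γ 1)) {x : ℝ} (hx : x ∈ Ico (0:ℝ) 1) {c : ℝ}
    (hc : geoSlope f (γ x) < ENNReal.ofReal c) :
    ∃ᶠ z in 𝓝[>] x, slope (f ∘ γ) x z < c * dist (γ 0) (γ 1) := by
  have hx' : x ∈ Icc (0:ℝ) 1 := Ico_subset_Icc_self hx
  have hrest := hγ.comp_affine_s19 hx' ⟨zero_le_one, le_rfl⟩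
  have hrest_dist : dist (γ (x + 0 * (1 - x))) (γ (x + 1 * (1 - x))) =
      (1 - x) * dist (γ 0) (γ 1) := by
    rw [zero_mul, add_zero, one_mul, add_sub_cancel, hγ.dist_one_right hx']
  have hrest_ne : γ (x + 0 * (1 - x)) ≠ γ (x + 1 * (1 - x)) := by
    rw [← dist_pos, hrest_dist]
    exact mul_pos (sub_pos.2 hx.2) hℓ
  have hmap : Tendsto (fun v => x + v * (1 - x)) (𝓝[>] 0) (𝓝[>] x) := by
    have hcont : ContinuousWithinAt (fun v : ℝ => x + v * (1 - x)) (Ioi 0) 0 := by fun_prop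
    simpa using hcont.tendsto_nhdsWithin (t := Ioi x) fun v (hv : 0 < v) =>
      show x < x + v * (1 - x) from lt_add_of_pos_right x (mul_pos hv (sub_pos.2 hx.2))
  refine hmap.frequently (((hrest.frequently_sub_lt_of_geoSlope_lt hrest_ne
    (by rwa [zero_mul, add_zero])).and_eventually self_mem_nhdsWithin).mono ?_)
  rintro v ⟨hlt, hv : 0 < v⟩
  rw [hrest_dist, zero_mul, add_zero] at hlt
  rw [slope_def_field, Function.comp_apply, Function.comp_apply, add_sub_cancel_left,
    div_lt_iff₀ (mul_pos hv (sub_pos.2 hx.2))]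
  exact hlt.trans_eq (by ring)

/-- `geoSlope f` is an upper gradient of `f` along geodesics. -/
theorem sub_le_mul_dist_of_geoSlope_le {f : X → ℝ} (hf : Continuous f) (hγ : IsGeodesicSeg γ)
    {L : ℝ} (hL : 0 ≤ L) (hslope : ∀ s ∈ Ico (0:ℝ) 1, geoSlope f (γ s) ≤ ENNReal.ofReal L) :
    f (γ 1) - f (γ 0) ≤ L * dist (γ 0) (γ 1) := by
  rcases (dist_nonneg : 0 ≤ dist (γ 0) (γ 1)).eq_or_lt with hℓ | hℓ
  · rw [← hℓ, mul_zero, dist_eq_zero.1 hℓ.symm, sub_self]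
  set ℓ := dist (γ 0) (γ 1)
  have bound : ∀ x ∈ Ico (0:ℝ) 1, ∀ r, L * ℓ < r →
      ∃ᶠ z in 𝓝[>] x, slope (f ∘ γ) x z < r := by
    intro x hx r hr
    have hc : geoSlope f (γ x) < ENNReal.ofReal (r / ℓ) :=
      (hslope x hx).trans_lt <| ENNReal.ofReal_lt_ofReal_iff'.2
        ⟨(lt_div_iff₀ hℓ).2 hr, div_pos ((mul_nonneg hL hℓ.le).trans_lt hr) hℓ⟩
    have hfreq : ∃ᶠ z in 𝓝[>] x, slope (f ∘ γ) x z < r / ℓ * ℓ :=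
      hγ.frequently_slope_comp_lt hℓ hx hc
    rwa [div_mul_cancel₀ r hℓ.ne'] at hfreq
  have hfence := image_le_of_liminf_slope_right_le_deriv_boundary
    (hf.comp_continuousOn hγ.continuousOn) (B := fun r => f (γ 0) + r * (L * ℓ))
    (by simp) (by fun_prop)
    (fun x _ => ((hasDerivAt_mul_const (L * ℓ)).const_add _).hasDerivWithinAt (x := x))
    bound (right_mem_Icc.2 zero_le_one)
  simp only [Function.comp_apply, one_mul] at hfence
  linarith

theorem sub_mul_sq_dist_le_sub {f : X → ℝ} {c : ℝ} (hγ : IsGeodesicSeg γ)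
    (heq : f (γ 0) + c = dist (γ 0) (γ 1) ^ 2 / 2) {s : ℝ} (hs : s ∈ Icc (0:ℝ) 1)
    (hle : f (γ s) + c ≤ dist (γ s) (γ 1) ^ 2 / 2) :
    (2 * s - s ^ 2) / 2 * dist (γ 0) (γ 1) ^ 2 ≤ f (γ 0) - f (γ s) := by
  rw [hγ.dist_one_right hs] at hle
  nlinarith

end IsGeodesicSeg

/-- If `φ` is Lipschitz, satisfies the Kantorovich relations along the geodesic `γ`
(with `c1 = φ^c(γ₁)`), and its slope along geodesics is bounded by `L` on `γ([0,t])`,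
then `φ(γ₀) − φ(γ_t) ≤ L·d(γ₀,γ_t)`; combined with the lower bound
`φ(γ₀) − φ(γ_t) ≥ ((2t − t²)/2) d²(γ₀,γ₁)` this yields `(1 − t/2) d(γ₀,γ₁) ≤ L`. -/
theorem slope_bound_along_geodesic
    (φ : X → ℝ) (hlip : ∃ K : ℝ≥0, LipschitzWith K φ)
    (γ : ℝ → X) (hγ : IsGeodesicSeg γ) (c1 : ℝ)
    (heq : φ (γ 0) + c1 = dist (γ 0) (γ 1) ^ 2 / 2)
    (hle : ∀ z : X, φ z + c1 ≤ dist z (γ 1) ^ 2 / 2)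
    (L : ℝ) (hL0 : 0 ≤ L)
    (t : ℝ) (ht : t ∈ Set.Ioc (0:ℝ) 1)
    (hLbound : ∀ s ∈ Set.Icc (0:ℝ) t, geoSlope φ (γ s) ≤ ENNReal.ofReal L) :
    φ (γ 0) - φ (γ t) ≤ L * dist (γ 0) (γ t) ∧
      (1 - t / 2) * dist (γ 0) (γ 1) ≤ L := by
  obtain ⟨K, hK⟩ := hlip
  have ht' : t ∈ Icc (0:ℝ) 1 := Ioc_subset_Icc_self ht
  have hupper := (hγ.comp_affine_s19 ht' ⟨le_rfl, zero_le_one⟩).sub_le_mul_dist_of_geoSlope_le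
    hK.continuous hL0 fun s hs => hLbound _ ⟨by nlinarith [hs.2, ht.1], by nlinarith [hs.1, ht.1]⟩
  simp only [zero_mul, add_zero, one_mul, zero_sub, add_neg_cancel] at hupper
  have hmain : φ (γ 0) - φ (γ t) ≤ L * dist (γ 0) (γ t) := by rwa [dist_comm] at hupper
  refine ⟨hmain, ?_⟩
  have hlow := hγ.sub_mul_sq_dist_le_sub heq ht' (hle (γ t))
  rw [hγ.dist_zero_left ht'] at hmain
  set d := dist (γ 0) (γ 1)
  have hsq : (1 - t / 2) * d * d ≤ L * d :=
    le_of_mul_le_mul_left (by nlinarith) ht.1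
  rcases (show 0 ≤ d from dist_nonneg).eq_or_lt with hd | hd
  · rw [← hd, mul_zero]; exact hL0
  · exact le_of_mul_le_mul_right hsq hd
end
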